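/- Let c>0, Δ>0, D={(x,y): x²+y²<c²Δ²}, u(x,y)=c²Δ²−x²−y², and for μ>0 let p_μ(x,y) = (μ/(2πc)) e^{−μΔ+(μ/c)√(u(x,y))}/√(u(x,y)), g_μ = √(p_μ), and ψ_μ = (g_μ/2)(1/μ − Δ + √(u)/c). Then for every λ>0, (1/h²) ∬_D (g_{λ+h}(x,y) − g_λ(x,y) − h ψ_λ(x,y))² dx dy → 0 as h→0 (h ranging over values with λ+h>0). In other words, the square-root density λ ↦ g_λ is differentiable in L²(D) with derivative ψ_λ, i.e. the experiment generated by a planar random flight observed at time step Δ is regular. -/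

import Mathlib

/-!
On `D`, with `u = c²Δ² - |q|²` and `s = -Δ + √u / c ∈ [-Δ, 0]`, the square-root
density factors as `√p_μ(q) = (2πc√u)^(-1/2) · √μ e^{μs/2}`, and `ψ_λ` is the same
prefactor times the `μ`-derivative at `λ`. The second `μ`-derivative of `√μ e^{μs/2}` is
bounded uniformly in `s ∈ [-Δ, 0]` and `μ ∈ [λ/2, 2λ]`, so Taylor's theorem bounds the
squared remainder by `K² h⁴ / (2πc√u)`. Finally `1/√u` is integrable on `D`: every
horizontal chord contributes `∫ dy / √(b² - y²) = π`. Hence the integral is `O(h⁴)`.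
-/

open MeasureTheory Real

/-- The absolutely continuous density of a planar random flight at time step `Δ`,
speed `c` and Poisson rate `μ`, evaluated at the point `q` of the open disc of
radius `cΔ`. -/
noncomputable def prfDensity (c Δ μ : ℝ) (q : ℝ × ℝ) : ℝ :=
  μ / (2 * π * c) *
    Real.exp (-μ * Δ + μ / c * Real.sqrt (c ^ 2 * Δ ^ 2 - q.1 ^ 2 - q.2 ^ 2)) /
      Real.sqrt (c ^ 2 * Δ ^ 2 - q.1 ^ 2 - q.2 ^ 2)

open Set

theorem norm_sub_sub_smul_le_of_hasDerivWithinAt {E : Type*} [NormedAddCommGroup E]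
    [NormedSpace ℝ E] {f f' f'' : ℝ → E} {x h K : ℝ}
    (hf : ∀ z ∈ uIcc x (x + h), HasDerivWithinAt f (f' z) (uIcc x (x + h)) z)
    (hf' : ∀ z ∈ uIcc x (x + h), HasDerivWithinAt f' (f'' z) (uIcc x (x + h)) z)
    (hK : ∀ z ∈ uIcc x (x + h), ‖f'' z‖ ≤ K) :
    ‖f (x + h) - f x - h • f' x‖ ≤ K * h ^ 2 := by
  have hK₀ : 0 ≤ K := (norm_nonneg _).trans (hK x left_mem_uIcc)
  have hdist : ∀ z ∈ uIcc x (x + h), ‖z - x‖ ≤ |h| := fun z hz => by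
    simpa using abs_sub_left_of_mem_uIcc hz
  have hlip : ∀ z ∈ uIcc x (x + h), ‖f' z - f' x‖ ≤ K * |h| := fun z hz =>
    ((convex_uIcc _ _).norm_image_sub_le_of_norm_hasDerivWithin_le hf' hK left_mem_uIcc
      hz).trans (by gcongr; exact hdist z hz)
  have hg : ∀ z ∈ uIcc x (x + h), HasDerivWithinAt (fun z => f z - z • f' x) (f' z - f' x)
      (uIcc x (x + h)) z := fun z hz =>
    ((hf z hz).sub ((hasDerivWithinAt_id z _).smul_const (f' x))).congr_deriv (by simp)
  have hmvt := (convex_uIcc _ _).norm_image_sub_le_of_norm_hasDerivWithin_le hg hlip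
    left_mem_uIcc right_mem_uIcc
  calc ‖f (x + h) - f x - h • f' x‖
      = ‖f (x + h) - (x + h) • f' x - (f x - x • f' x)‖ := by
        rw [add_smul]; congr 1; abel
    _ ≤ K * |h| * ‖x + h - x‖ := hmvt
    _ = K * h ^ 2 := by rw [add_sub_cancel_left, norm_eq_abs, mul_assoc, ← sq, sq_abs]

namespace PlanarRandomFlight

noncomputable def rateFactor (s μ : ℝ) : ℝ := √μ * exp (μ * s / 2)

noncomputable def rateFactorDeriv (s μ : ℝ) : ℝ := rateFactor s μ / 2 * (μ⁻¹ + s)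

noncomputable def rateFactorDeriv2 (s μ : ℝ) : ℝ :=
  rateFactor s μ / 4 * ((μ⁻¹ + s) ^ 2 - 2 * (μ ^ 2)⁻¹)

theorem hasDerivAt_rateFactor (s : ℝ) {μ : ℝ} (hμ : 0 < μ) :
    HasDerivAt (rateFactor s) (rateFactorDeriv s μ) μ := by
  have hexp : HasDerivAt (fun μ => exp (μ * s / 2)) (exp (μ * s / 2) * (s / 2)) μ := by
    simpa [mul_div_assoc] using ((hasDerivAt_id μ).mul_const (s / 2)).exp
  refine ((hasDerivAt_sqrt hμ.ne').mul hexp).congr_deriv ?_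
  simp only [rateFactorDeriv, rateFactor]
  field_simp
  rw [sq_sqrt hμ.le]

theorem hasDerivAt_rateFactorDeriv (s : ℝ) {μ : ℝ} (hμ : 0 < μ) :
    HasDerivAt (rateFactorDeriv s) (rateFactorDeriv2 s μ) μ := by
  have := ((hasDerivAt_rateFactor s hμ).div_const 2).mul ((hasDerivAt_inv hμ.ne').add_const s)
  refine this.congr_deriv ?_
  simp only [rateFactorDeriv2, rateFactorDeriv]
  field_simp
  ring

theorem continuousOn_rateFactorDeriv2 :
    ContinuousOn (fun p : ℝ × ℝ => rateFactorDeriv2 p.1 p.2) {p | p.2 ≠ 0} := by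
  refine fun p (hp : p.2 ≠ 0) => ContinuousAt.continuousWithinAt ?_
  simp only [rateFactorDeriv2, rateFactor]
  fun_prop (disch := simp [hp])

theorem exists_abs_rateFactorDeriv2_le (a b : ℝ) {m M : ℝ} (hm : 0 < m) :
    ∃ K, ∀ s ∈ Icc a b, ∀ μ ∈ Icc m M, |rateFactorDeriv2 s μ| ≤ K := by
  obtain ⟨K, hK⟩ := (isCompact_Icc.prod isCompact_Icc).exists_bound_of_continuousOn
    (continuousOn_rateFactorDeriv2.mono fun p hp => (hm.trans_le (mem_prod.1 hp).2.1).ne')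
  exact ⟨K, fun s hs μ hμ => hK (s, μ) (mk_mem_prod hs hμ)⟩

theorem hasDerivAt_arcsin_div_sqrt {r y : ℝ} (hy : y ∈ Ioo (-√r) √r) :
    HasDerivAt (fun y => arcsin (y / √r)) (√(r - y ^ 2))⁻¹ y := by
  have hr : 0 < √r := neg_lt_self_iff.1 (hy.1.trans hy.2)
  have hr₀ : 0 < r := sqrt_pos.1 hr
  have hyr : y ^ 2 < r := sq_lt.2 hy
  have h₁ : y / √r ≠ -1 := by
    rw [Ne, div_eq_iff hr.ne']; linarith [hy.1]
  have h₂ : y / √r ≠ 1 := by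
    rw [Ne, div_eq_iff hr.ne']; linarith [hy.2]
  refine ((hasDerivAt_arcsin h₁ h₂).comp y ((hasDerivAt_id y).div_const √r)).congr_deriv ?_
  have hsub : 1 - (y / √r) ^ 2 = (r - y ^ 2) / √r ^ 2 := by
    rw [div_pow, sq_sqrt hr₀.le]; field_simp
  rw [hsub, sqrt_div' _ (sq_nonneg _), sqrt_sq hr.le]
  have : 0 < √(r - y ^ 2) := sqrt_pos.2 (by linarith)
  field_simp

theorem integrableOn_inv_sqrt_sub_sq (r : ℝ) :
    IntegrableOn (fun y => (√(r - y ^ 2))⁻¹) (Ioo (-√r) √r) :=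
  (intervalIntegral.integrableOn_deriv_of_nonneg (continuous_arcsin.comp
      (continuous_id.div_const √r)).continuousOn (fun _ hy => hasDerivAt_arcsin_div_sqrt hy)
      (fun _ _ => by positivity)).mono_set Ioo_subset_Ioc_self

theorem integral_inv_sqrt_sub_sq {r : ℝ} (hr : 0 < r) :
    ∫ y in Ioo (-√r) √r, (√(r - y ^ 2))⁻¹ = π := by
  have hle : -√r ≤ √r := by linarith [sqrt_nonneg r]
  rw [integral_Ioc_eq_integral_Ioo.symm, ← intervalIntegral.integral_of_le hle,
    intervalIntegral.integral_eq_sub_of_hasDerivAt_of_le hle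
      (continuous_arcsin.comp (continuous_id.div_const √r)).continuousOn
      (fun _ hy => hasDerivAt_arcsin_div_sqrt hy)
      ((intervalIntegrable_iff_integrableOn_Ioo_of_le hle).2 (integrableOn_inv_sqrt_sub_sq r))]
  have : √r ≠ 0 := (sqrt_pos.2 hr).ne'
  simp [neg_div, div_self this]

theorem preimage_prodMk_setOf_sq_add_sq_lt (r x : ℝ) :
    Prod.mk x ⁻¹' {q : ℝ × ℝ | q.1 ^ 2 + q.2 ^ 2 < r} =
      Ioo (-√(r - x ^ 2)) √(r - x ^ 2) := by
  ext y
  simp only [mem_preimage, mem_ofPred_eq, mem_Ioo, ← sq_lt]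
  constructor <;> intro <;> linarith

theorem integrableOn_inv_sqrt_sub_sq_sub_sq (r : ℝ) :
    IntegrableOn (fun q : ℝ × ℝ => (√(r - q.1 ^ 2 - q.2 ^ 2))⁻¹)
      {q | q.1 ^ 2 + q.2 ^ 2 < r} := by
  set D := {q : ℝ × ℝ | q.1 ^ 2 + q.2 ^ 2 < r}
  have hD : MeasurableSet D := measurableSet_lt (by fun_prop) measurable_const
  have hslice : ∀ x, (fun y => D.indicator (fun q => (√(r - q.1 ^ 2 - q.2 ^ 2))⁻¹) (x, y)) =
      (Ioo (-√(r - x ^ 2)) √(r - x ^ 2)).indicator fun y => (√(r - x ^ 2 - y ^ 2))⁻¹ := by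
    intro x
    ext y
    rw [← preimage_prodMk_setOf_sq_add_sq_lt r x]
    exact (indicator_comp_right (Prod.mk x)).symm
  have hnorm : ∀ x, ∫ y, ‖D.indicator (fun q => (√(r - q.1 ^ 2 - q.2 ^ 2))⁻¹) (x, y)‖ =
      (Ioo (-√r) √r).indicator (fun _ => π) x := by
    intro x
    simp only [hslice x, norm_indicator_eq_indicator_norm, norm_inv, norm_eq_abs,
      abs_of_nonneg (sqrt_nonneg _)]
    rw [integral_indicator measurableSet_Ioo]
    by_cases hx : x ∈ Ioo (-√r) √r
    · rw [indicator_of_mem hx, integral_inv_sqrt_sub_sq (sub_pos.2 (sq_lt.2 hx))]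
    · have : r - x ^ 2 ≤ 0 := by rw [mem_Ioo, ← sq_lt] at hx; linarith
      simp [indicator_of_notMem hx, sqrt_eq_zero'.2 this]
  rw [← integrable_indicator_iff hD, Measure.volume_eq_prod,
    integrable_prod_iff ((Measurable.indicator (by fun_prop) hD).aestronglyMeasurable)]
  refine ⟨ae_of_all _ fun x => ?_, ?_⟩
  · rw [hslice, integrable_indicator_iff measurableSet_Ioo]
    exact integrableOn_inv_sqrt_sub_sq _
  · simp_rw [hnorm]
    exact (integrable_indicator_iff measurableSet_Ioo).2 (integrableOn_const measure_Ioo_lt_top.ne)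

theorem sqrt_prfDensity_eq {c Δ μ : ℝ} {q : ℝ × ℝ} (hc : c ≠ 0) (hμ : 0 ≤ μ)
    (hq : q.1 ^ 2 + q.2 ^ 2 < c ^ 2 * Δ ^ 2) :
    √(prfDensity c Δ μ q) = √((2 * π * c * √(c ^ 2 * Δ ^ 2 - q.1 ^ 2 - q.2 ^ 2))⁻¹) *
      rateFactor (-Δ + √(c ^ 2 * Δ ^ 2 - q.1 ^ 2 - q.2 ^ 2) / c) μ := by
  rw [prfDensity]
  set w := √(c ^ 2 * Δ ^ 2 - q.1 ^ 2 - q.2 ^ 2)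
  have hw : w ≠ 0 := (sqrt_pos.2 (by linarith)).ne'
  rw [show μ / (2 * π * c) * exp (-μ * Δ + μ / c * w) / w =
      μ * exp (μ * (-Δ + w / c)) * (2 * π * c * w)⁻¹ by field_simp,
    sqrt_mul (by positivity), sqrt_mul hμ, ← exp_half, rateFactor]
  ring_nf

theorem sq_sqrt_prfDensity_remainder_le {c Δ lam h K : ℝ} {q : ℝ × ℝ} (hc : 0 < c)
    (hΔ : 0 ≤ Δ) (hlam : 0 < lam) (hh : |h| ≤ lam / 2)
    (hK : ∀ s ∈ Icc (-Δ) 0, ∀ μ ∈ Icc (lam / 2) (2 * lam), |rateFactorDeriv2 s μ| ≤ K)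
    (hq : q.1 ^ 2 + q.2 ^ 2 < c ^ 2 * Δ ^ 2) :
    (√(prfDensity c Δ (lam + h) q) - √(prfDensity c Δ lam q) -
        h * (√(prfDensity c Δ lam q) / 2 *
          (1 / lam - Δ + √(c ^ 2 * Δ ^ 2 - q.1 ^ 2 - q.2 ^ 2) / c))) ^ 2
      ≤ K ^ 2 * h ^ 4 * (2 * π * c * √(c ^ 2 * Δ ^ 2 - q.1 ^ 2 - q.2 ^ 2))⁻¹ := by
  obtain ⟨hh₁, hh₂⟩ := abs_le.1 hh
  rw [sqrt_prfDensity_eq hc.ne' (by linarith) hq, sqrt_prfDensity_eq hc.ne' hlam.le hq]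
  set w := √(c ^ 2 * Δ ^ 2 - q.1 ^ 2 - q.2 ^ 2)
  have hw : 0 < w := sqrt_pos.2 (by linarith)
  have hs : -Δ + w / c ∈ Icc (-Δ) 0 := by
    have : w ≤ c * Δ := by
      rw [← sqrt_sq (by positivity : 0 ≤ c * Δ)]
      exact sqrt_le_sqrt (by nlinarith)
    constructor
    · linarith [div_nonneg hw.le hc.le]
    · linarith [(div_le_iff₀' hc).2 this]
  have hI : uIcc lam (lam + h) ⊆ Icc (lam / 2) (2 * lam) :=
    uIcc_subset_Icc ⟨by linarith, by linarith⟩ ⟨by linarith, by linarith⟩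
  have hpos : ∀ z ∈ uIcc lam (lam + h), 0 < z := fun z hz => by linarith [(hI hz).1]
  have htaylor : |rateFactor (-Δ + w / c) (lam + h) - rateFactor (-Δ + w / c) lam -
      h * rateFactorDeriv (-Δ + w / c) lam| ≤ K * h ^ 2 :=
    norm_sub_sub_smul_le_of_hasDerivWithinAt
      (fun z hz => (hasDerivAt_rateFactor _ (hpos z hz)).hasDerivWithinAt)
      (fun z hz => (hasDerivAt_rateFactorDeriv _ (hpos z hz)).hasDerivWithinAt)
      (fun z hz => hK _ hs z (hI hz))
  calc _ = √((2 * π * c * w)⁻¹) ^ 2 * (rateFactor (-Δ + w / c) (lam + h) -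
        rateFactor (-Δ + w / c) lam - h * rateFactorDeriv (-Δ + w / c) lam) ^ 2 := by
        rw [rateFactorDeriv]
        ring
    _ ≤ √((2 * π * c * w)⁻¹) ^ 2 * (K * h ^ 2) ^ 2 :=
        mul_le_mul_of_nonneg_left (sq_le_sq' (abs_le.1 htaylor).1 (abs_le.1 htaylor).2)
          (sq_nonneg _)
    _ = _ := by
        rw [sq_sqrt (by positivity)]
        ring

end PlanarRandomFlight

open PlanarRandomFlight Filter Topology

theorem sqrt_density_L2_differentiable (c Δ lam : ℝ)
    (hc : 0 < c) (hΔ : 0 < Δ) (hlam : 0 < lam) :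
    Filter.Tendsto
      (fun h : ℝ => (1 / h ^ 2) *
        ∫ q in {q : ℝ × ℝ | q.1 ^ 2 + q.2 ^ 2 < c ^ 2 * Δ ^ 2},
          (Real.sqrt (prfDensity c Δ (lam + h) q) - Real.sqrt (prfDensity c Δ lam q) -
            h * (Real.sqrt (prfDensity c Δ lam q) / 2 *
              (1 / lam - Δ + Real.sqrt (c ^ 2 * Δ ^ 2 - q.1 ^ 2 - q.2 ^ 2) / c))) ^ 2)
      (nhdsWithin 0 {h : ℝ | h ≠ 0 ∧ 0 < lam + h})
      (nhds 0) := by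
  obtain ⟨K, hK⟩ := exists_abs_rateFactorDeriv2_le (-Δ) 0 (half_pos hlam) (M := 2 * lam)
  set D := {q : ℝ × ℝ | q.1 ^ 2 + q.2 ^ 2 < c ^ 2 * Δ ^ 2}
  set G := fun q : ℝ × ℝ => (2 * π * c * √(c ^ 2 * Δ ^ 2 - q.1 ^ 2 - q.2 ^ 2))⁻¹
  have hD : MeasurableSet D := measurableSet_lt (by fun_prop) measurable_const
  have hG : IntegrableOn G D :=
    IntegrableOn.congr_fun
      (Integrable.const_mul (integrableOn_inv_sqrt_sub_sq_sub_sq _) (2 * π * c)⁻¹)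
      (fun _ _ => (mul_inv _ _).symm) hD
  have hlim : Tendsto (fun h : ℝ => K ^ 2 * (∫ q in D, G q) * h ^ 2) (𝓝 0) (𝓝 0) := by
    simpa using ((continuous_pow 2).const_mul (K ^ 2 * ∫ q in D, G q)).tendsto 0
  refine squeeze_zero' (Eventually.of_forall fun h => by positivity) ?_
    (hlim.mono_left nhdsWithin_le_nhds)
  filter_upwards [nhdsWithin_le_nhds (Metric.closedBall_mem_nhds (0 : ℝ) (half_pos hlam)),
    self_mem_nhdsWithin] with h hh hne
  rw [mem_closedBall_zero_iff, norm_eq_abs] at hh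
  calc _ ≤ 1 / h ^ 2 * ∫ q in D, K ^ 2 * h ^ 4 * G q :=
        mul_le_mul_of_nonneg_left (integral_mono_of_nonneg (ae_of_all _ fun _ => sq_nonneg _)
          (hG.const_mul _) ((ae_restrict_iff' hD).2 (ae_of_all _ fun q hq =>
            sq_sqrt_prfDensity_remainder_le hc hΔ.le hlam hh hK hq))) (by positivity)
    _ = K ^ 2 * (∫ q in D, G q) * h ^ 2 := by
        rw [integral_const_mul]
        field_simp [hne.1]
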